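/- For the dihedral group I_2(N) with constant multiplicity m, the polynomials q_j (j = 1,…,N−1) defined as q_j = Σ_{t=0}^{m} a_{jt} z̄^{tN} z^{(m−t)N+j}, with coefficients (a_{j0},…,a_{jm}) a nonzero solution of the system Σ_{t=0}^{m} ((m−2t)N + j)^{2s−1} a_{jt} = 0 for s = 1,…,m, are m-quasiinvariants of I_2(N). -/

import Mathlib

/-!
On the circle `z = r e^{iφ}` every monomial `z̄^p z^q` is `r^{p+q} e^{i(q-p)φ}`, so `q_j`
restricts to `r^{mN+j} Σ_t a_t e^{i c_t φ}` with frequencies `c_t = (m-2t)N + j`, and its `n`-th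
angular derivative is `r^{mN+j} Σ_t a_t (i c_t)^n e^{i c_t φ}`. The frequencies differ from
`mN + j` by multiples of `2N`, so at a mirror angle `φ = πk/N` all the exponentials coincide and
the derivative is a common factor times `Σ_t c_t^n a_t`, which vanishes for odd `n ≤ 2m-1` by
the linear system.
-/

open Complex Finset

theorem iteratedDeriv_cexp_const_mul_ofReal (n : ℕ) (z : ℂ) :
    iteratedDeriv n (fun φ : ℝ => exp (z * φ)) = fun φ : ℝ => z ^ n * exp (z * φ) := by
  induction n with
  | zero => simp
  | succ n ih =>
    funext φ
    rw [iteratedDeriv_succ, ih]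
    have h := (((hasDerivAt_id (φ : ℂ)).const_mul z).cexp.comp_ofReal).const_mul (z ^ n)
    simp only [mul_one, id] at h
    rw [h.deriv, pow_succ]
    ring

theorem iteratedDeriv_sum_mul_cexp {ι : Type*} (s : Finset ι) (b z : ι → ℂ) (n : ℕ) (φ : ℝ) :
    iteratedDeriv n (fun φ : ℝ => ∑ t ∈ s, b t * exp (z t * φ)) φ =
      ∑ t ∈ s, b t * z t ^ n * exp (z t * φ) := by
  rw [iteratedDeriv_fun_sum (f := fun t (φ : ℝ) => b t * exp (z t * φ)) fun t _ =>
    (contDiff_const.mul (contDiff_const.mul ofRealCLM.contDiff).cexp).contDiffAt]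
  refine sum_congr rfl fun t _ => ?_
  rw [iteratedDeriv_const_mul_field, iteratedDeriv_cexp_const_mul_ofReal, mul_assoc]

theorem conj_pow_mul_pow_polar (r φ : ℝ) (p q : ℕ) :
    (starRingEnd ℂ) (r * exp (φ * I)) ^ p * (r * exp (φ * I)) ^ q =
      (r : ℂ) ^ (p + q) * exp (((q : ℤ) - p : ℤ) * I * φ) := by
  rw [map_mul, conj_ofReal, ← exp_conj, map_mul, conj_ofReal, conj_I, mul_pow, mul_pow,
    ← exp_nat_mul, ← exp_nat_mul, pow_add]
  calc _ = (r : ℂ) ^ p * (r : ℂ) ^ q * (exp (p * (φ * -I)) * exp (q * (φ * I))) := by ring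
    _ = _ := by rw [← exp_add]; push_cast; ring_nf

theorem sum_conj_pow_mul_pow_polar (N m j : ℕ) (a : Fin (m + 1) → ℂ) (r φ : ℝ) :
    ∑ t : Fin (m + 1), a t * (starRingEnd ℂ) (r * exp (φ * I)) ^ ((t : ℕ) * N) *
        (r * exp (φ * I)) ^ ((m - (t : ℕ)) * N + j) =
      ∑ t : Fin (m + 1), ((r : ℂ) ^ (m * N + j) * a t) *
        exp (((((m : ℤ) - 2 * (t : ℕ)) * N + j : ℤ) : ℂ) * I * φ) := by
  refine sum_congr rfl fun t _ => ?_
  have ht : (t : ℕ) ≤ m := Nat.lt_succ_iff.mp t.isLt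
  have hdeg : (t : ℕ) * N + ((m - t) * N + j) = m * N + j := by
    rw [Nat.sub_mul, ← add_assoc, Nat.add_sub_cancel' (Nat.mul_le_mul_right N ht)]
  have hfreq : ((((m - (t : ℕ)) * N + j : ℕ) : ℤ) - ((t : ℕ) * N : ℕ) : ℤ) =
      ((m : ℤ) - 2 * (t : ℕ)) * N + j := by
    push_cast [Nat.cast_sub ht]
    ring
  rw [mul_assoc, conj_pow_mul_pow_polar, hdeg, hfreq]
  ring

theorem cexp_sub_two_mul_mul_I_mul_pi_div {N : ℕ} (hN : N ≠ 0) (k t : ℤ) (d : ℂ) :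
    exp ((d - 2 * t * N) * I * ↑(Real.pi * k / N)) = exp (d * I * ↑(Real.pi * k / N)) := by
  have h : (d - 2 * t * N) * I * ↑(Real.pi * k / N) =
      d * I * ↑(Real.pi * k / N) + (-(t * k) : ℤ) * (2 * Real.pi * I) := by
    push_cast
    field_simp
    ring
  rw [h, exp_add, exp_int_mul_two_pi_mul_I, mul_one]

theorem stmt11_general (N m : ℕ) (j : ℕ)
    (a : Fin (m+1) → ℂ)
    (hsys : ∀ s : ℕ, 1 ≤ s → s ≤ m →
      ∑ t : Fin (m+1),
        (((((m:ℤ) - 2 * (t:ℕ)) * N + j : ℤ)) : ℂ)^(2*s-1) * a t = 0) :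
    ∀ (r : ℝ) (k : ℕ), k < N → ∀ s : ℕ, 1 ≤ s → s ≤ m →
      iteratedDeriv (2*s-1)
        (fun φ : ℝ => ∑ t : Fin (m+1),
          a t * ((starRingEnd ℂ) ((r:ℂ) * Complex.exp ((φ:ℂ) * Complex.I))) ^ ((t:ℕ) * N)
            * ((r:ℂ) * Complex.exp ((φ:ℂ) * Complex.I)) ^ ((m - (t:ℕ)) * N + j))
        (Real.pi * k / N) = 0 := by
  intro r k hk s hs1 hs2
  simp only [sum_conj_pow_mul_pow_polar, iteratedDeriv_sum_mul_cexp]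
  set c : Fin (m+1) → ℂ := fun t => (((((m:ℤ) - 2 * (t:ℕ)) * N + j : ℤ)) : ℂ)
  have hmirror : ∀ t, exp (c t * I * ↑(Real.pi * k / N)) =
      exp (((m * N + j : ℕ) : ℂ) * I * ↑(Real.pi * k / N)) := by
    intro t
    have h := cexp_sub_two_mul_mul_I_mul_pi_div (by omega : N ≠ 0) k (t : ℕ) ((m * N + j : ℕ) : ℂ)
    simp only [Int.cast_natCast] at h
    rw [← h]
    congr 3
    simp only [c]
    push_cast
    ring
  calc _ = ∑ t, ((r : ℂ) ^ (m * N + j) * I ^ (2 * s - 1) *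
          exp (((m * N + j : ℕ) : ℂ) * I * ↑(Real.pi * k / N))) * (c t ^ (2 * s - 1) * a t) :=
        sum_congr rfl fun t _ => by rw [hmirror]; ring
    _ = 0 := by rw [← mul_sum, hsys s hs1 hs2, mul_zero]

/-- The polynomials `q_j = Σ_t a_t z̄^{tN} z^{(m−t)N+j}` with coefficients solving
`Σ_t ((m−2t)N+j)^{2s−1} a_t = 0`, `s = 1,…,m`, are `m`-quasiinvariants of `I₂(N)`:
all odd angular derivatives up to order `2m−1` vanish on the mirror lines `φ = πk/N`. -/
theorem stmt11 (N m : ℕ) (hN : 2 ≤ N) (j : ℕ) (hj1 : 1 ≤ j) (hj2 : j ≤ N - 1)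
    (a : Fin (m+1) → ℂ) (ha : a ≠ 0)
    (hsys : ∀ s : ℕ, 1 ≤ s → s ≤ m →
      ∑ t : Fin (m+1),
        (((((m:ℤ) - 2 * (t:ℕ)) * N + j : ℤ)) : ℂ)^(2*s-1) * a t = 0) :
    ∀ (r : ℝ) (k : ℕ), k < N → ∀ s : ℕ, 1 ≤ s → s ≤ m →
      iteratedDeriv (2*s-1)
        (fun φ : ℝ => ∑ t : Fin (m+1),
          a t * ((starRingEnd ℂ) ((r:ℂ) * Complex.exp ((φ:ℂ) * Complex.I))) ^ ((t:ℕ) * N)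
            * ((r:ℂ) * Complex.exp ((φ:ℂ) * Complex.I)) ^ ((m - (t:ℕ)) * N + j))
        (Real.pi * k / N) = 0 :=
  stmt11_general N m j a hsys
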